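/- arXiv:1811.05808 — 2 statements merged into one kernel-verified Lean document; each statement's English description precedes it below -/
import Mathlib

section
/- Let G be a finite simple graph and ℓ ≥ 1 an integer. If G is ℓ-tangle-free, then for all vertices i, j one has D^(ℓ)_{ij} ≤ B^(ℓ)_{ij} ≤ D^(ℓ)_{ij} + 1; in other words, every entry of the matrix Δ^(ℓ) = B^(ℓ) − D^(ℓ) lies in {0, 1}. -/
/-- The `(i,j)` entry of the path expansion matrix `B^(ℓ)`: the number of self-avoiding
paths of length `ℓ` from `i` to `j`. -/
noncomputable def pathCount {V : Type*} (G : SimpleGraph V) (ℓ : ℕ) (i j : V) : ℕ :=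
  Set.ncard {p : G.Walk i j | p.IsPath ∧ p.length = ℓ}

/-- The `(i,j)` entry of the distance matrix `D^(ℓ)`: `1` if the graph distance between
`i` and `j` equals `ℓ`, and `0` otherwise. -/
noncomputable def distEntry {V : Type*} (G : SimpleGraph V) (ℓ : ℕ) (i j : V) : ℕ :=
  if G.edist i j = (ℓ : ℕ∞) then 1 else 0

/-- A graph is `ℓ`-tangle-free if, for every vertex `v`, any two cycles all of whose
vertices lie at graph distance at most `ℓ` from `v` have the same edge set. -/
def TangleFree {V : Type*} [DecidableEq V] (G : SimpleGraph V) (ℓ : ℕ) : Prop :=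
  ∀ (v a b : V) (c₁ : G.Walk a a) (c₂ : G.Walk b b),
    c₁.IsCycle → c₂.IsCycle →
    (∀ w ∈ c₁.support, G.edist v w ≤ (ℓ : ℕ∞)) →
    (∀ w ∈ c₂.support, G.edist v w ≤ (ℓ : ℕ∞)) →
    c₁.edges.toFinset = c₂.edges.toFinset

/-!
Paths of length at most `ℓ` from `i` stay in the ball of radius `ℓ` about `i`. Two distinct
such paths close a cycle in that ball, and by tangle-freeness every cycle in the ball uses one
fixed edge `e`; removing `e` leaves a forest there. Hence a path inside the ball is determined by
its endpoints and by whether it uses `e`: two paths avoiding `e` coincide, and two paths through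
`e` cannot cross it in opposite directions, so they coincide on both sides of `e`. Among any
three such paths two are therefore equal. A geodesic from `i` to `j` is such a path of length
`d(i, j)`: if `d(i, j) = ℓ` it shows `B_ij ≥ 1`, and if `d(i, j) < ℓ` it leaves room for at
most one path of length `ℓ`.
-/

theorem Set.encard_le_two_of_forall_eq_or_eq_or_eq {α : Type*} {s : Set α}
    (h : ∀ a ∈ s, ∀ b ∈ s, ∀ c ∈ s, a = b ∨ a = c ∨ b = c) : s.encard ≤ 2 := by
  by_cases hs : s.Subsingleton
  · exact (encard_le_one_iff_subsingleton.mpr hs).trans one_le_two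
  obtain ⟨a, ha, b, hb, hab⟩ := not_subsingleton_iff.mp hs
  calc s.encard ≤ ({a, b} : Set α).encard := encard_le_encard fun c hc => by
        rcases h a ha b hb c hc with h | h | h
        exacts [absurd h hab, .inl h.symm, .inr h.symm]
    _ = 2 := encard_pair hab

namespace SimpleGraph

variable {V : Type*} {G : SimpleGraph V} {u v : V}

theorem Reachable.exists_isPath_length_eq_edist (h : G.Reachable u v) :
    ∃ p : G.Walk u v, p.IsPath ∧ (p.length : ℕ∞) = G.edist u v := by
  classical
  obtain ⟨p, hp⟩ := h.exists_walk_length_eq_edist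
  exact ⟨p.bypass, p.bypass_isPath,
    le_antisymm (hp ▸ Nat.cast_le.mpr p.length_bypass_le_length) (edist_le _)⟩

namespace Walk

theorem edist_le_length_of_mem_support (p : G.Walk u v) {w : V} (hw : w ∈ p.support) :
    G.edist u w ≤ p.length := by
  classical
  exact (edist_le (p.takeUntil w hw)).trans (Nat.cast_le.mpr (p.length_takeUntil_le_length hw))

theorem exists_eq_append_cons_of_mem_edges {e : Sym2 V} {p : G.Walk u v} (he : e ∈ p.edges) :
    ∃ (x y : V) (h : G.Adj x y) (A : G.Walk u x) (B : G.Walk y v),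
      e = s(x, y) ∧ p = A.append (cons h B) := by
  induction p with
  | nil => simp at he
  | @cons u a v h q ih =>
    rcases List.mem_cons.mp he with rfl | he
    · exact ⟨u, a, h, nil, q, rfl, rfl⟩
    · obtain ⟨x, y, hxy, A, B, rfl, rfl⟩ := ih he
      exact ⟨x, y, hxy, cons h A, B, rfl, rfl⟩

theorem isPath_append_cons_iff {x y : V} {h : G.Adj x y} {A : G.Walk u x} {B : G.Walk y v} :
    (A.append (cons h B)).IsPath ↔ A.IsPath ∧ B.IsPath ∧ A.support.Disjoint B.support := by
  simp only [isPath_def, support_append, support_cons, List.tail_cons, List.nodup_append']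

theorem IsPath.snd_bypass_append [DecidableEq V] {x : V} {A : G.Walk u x} (hA : A.IsPath)
    {D : G.Walk x v} (hu : u ∉ D.support) : (A.append D).bypass.snd = A.snd := by
  have hnil : ¬ (A.append D).bypass.Nil := not_nil_of_ne fun huv => hu (huv ▸ D.end_mem_support)
  have hmem := edges_bypass_subset_edges _ (mk_start_snd_mem_edges hnil)
  rw [edges_append, List.mem_append] at hmem
  exact hA.eq_snd_of_mem_edges
    (hmem.resolve_right fun h => hu (D.fst_mem_support_of_mem_edges h))

end Walk

def IsFeedbackEdge (G : SimpleGraph V) (S : Set V) (e : Sym2 V) : Prop :=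
  ∀ ⦃a : V⦄ (c : G.Walk a a), c.IsCycle → (∀ w ∈ c.support, w ∈ S) → e ∈ c.edges

namespace IsFeedbackEdge

variable {S : Set V} {e : Sym2 V} {i j : V}

open Walk

theorem eq_of_notMem_edges (h : G.IsFeedbackEdge S e) {p q : G.Walk i j}
    (hp : p.IsPath) (hq : q.IsPath) (hpS : ∀ w ∈ p.support, w ∈ S)
    (hqS : ∀ w ∈ q.support, w ∈ S) (hep : e ∉ p.edges) (heq : e ∉ q.edges) : p = q := by
  by_contra hne
  obtain ⟨_, _, p', q', hp', hq', hc⟩ := hp.exists_isCycle_of_ne hq hne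
  have hcS : ∀ w ∈ (p'.append q'.reverse).support, w ∈ S := by
    intro w hw
    rw [mem_support_append_iff, support_reverse, List.mem_reverse] at hw
    exact hw.elim (fun hw => hpS w (hp'.support_subset hw))
      (fun hw => hqS w (hq'.support_subset hw))
  have hec := h _ hc hcS
  rw [edges_append, edges_reverse, List.mem_append, List.mem_reverse] at hec
  exact hec.elim (fun he => hep (hp'.edges_subset he)) (fun he => heq (hq'.edges_subset he))

/-- Two paths `A ++ (x → y) ++ B` and `C ++ (y → x) ++ D` crossing `e = s(x, y)` in opposite
directions would give this configuration. The bypasses of `A ++ D` and `C ++ B` are the same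
path, so `A` and `C` leave `i` along the same edge; strip it and recurse until one of them is
empty, which contradicts disjointness. -/
theorem false_of_crossing (h : G.IsFeedbackEdge S e) {x y : V}
    {A : G.Walk i x} {C : G.Walk i y} {B : G.Walk y j} {D : G.Walk x j}
    (hA : A.IsPath) (hC : C.IsPath)
    (hADS : ∀ w ∈ (A.append D).support, w ∈ S)
    (hCBS : ∀ w ∈ (C.append B).support, w ∈ S)
    (heAD : e ∉ (A.append D).edges) (heCB : e ∉ (C.append B).edges)
    (hAB : A.support.Disjoint B.support) (hCD : C.support.Disjoint D.support) : False := by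
  classical
  induction A with
  | nil => exact hCD C.start_mem_support D.start_mem_support
  | @cons i a x hia A ih =>
    cases C with
    | nil => exact hAB (start_mem_support _) B.start_mem_support
    | @cons _ c _ hic C =>
      have hbypass : ((cons hia A).append D).bypass = ((cons hic C).append B).bypass :=
        h.eq_of_notMem_edges (bypass_isPath _) (bypass_isPath _)
          (fun w hw => hADS w (support_bypass_subset_support _ hw))
          (fun w hw => hCBS w (support_bypass_subset_support _ hw))
          (fun he => heAD (edges_bypass_subset_edges _ he))
          (fun he => heCB (edges_bypass_subset_edges _ he))
      have hca : c = a := by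
        have hsnd := congrArg Walk.snd hbypass
        rwa [hA.snd_bypass_append (hCD (start_mem_support _)),
          hC.snd_bypass_append (hAB (start_mem_support _)), snd_cons, snd_cons, eq_comm] at hsnd
      subst hca
      exact ih hA.of_cons hC.of_cons (fun w hw => hADS w (by simp [hw]))
        (fun w hw => hCBS w (by simp [hw]))
        (fun he => heAD (by rw [cons_append, edges_cons]; exact .tail _ he))
        (fun he => heCB (by rw [cons_append, edges_cons]; exact .tail _ he))
        (List.disjoint_cons_left.mp hAB).2 (List.disjoint_cons_left.mp hCD).2

theorem eq_of_mem_edges (h : G.IsFeedbackEdge S e) {p q : G.Walk i j}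
    (hp : p.IsPath) (hq : q.IsPath) (hpS : ∀ w ∈ p.support, w ∈ S)
    (hqS : ∀ w ∈ q.support, w ∈ S) (hep : e ∈ p.edges) (heq : e ∈ q.edges) : p = q := by
  obtain ⟨x, y, hxy, A, B, rfl, rfl⟩ := exists_eq_append_cons_of_mem_edges hep
  obtain ⟨x', y', hxy', C, D, he, rfl⟩ := exists_eq_append_cons_of_mem_edges heq
  obtain ⟨hA, hB, hAB⟩ := isPath_append_cons_iff.mp hp
  obtain ⟨hC, hD, hCD⟩ := isPath_append_cons_iff.mp hq
  have hAS : ∀ w ∈ A.support, w ∈ S := fun w hw => hpS w (by simp [hw])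
  have hBS : ∀ w ∈ B.support, w ∈ S := fun w hw => hpS w (by simp [hw])
  have hCS : ∀ w ∈ C.support, w ∈ S := fun w hw => hqS w (by simp [hw])
  have hDS : ∀ w ∈ D.support, w ∈ S := fun w hw => hqS w (by simp [hw])
  have heA : s(x, y) ∉ A.edges := fun h =>
    hAB (A.snd_mem_support_of_mem_edges h) B.start_mem_support
  have heB : s(x, y) ∉ B.edges := fun h =>
    hAB A.end_mem_support (B.fst_mem_support_of_mem_edges h)
  have heC : s(x', y') ∉ C.edges := fun h =>
    hCD (C.snd_mem_support_of_mem_edges h) D.start_mem_support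
  have heD : s(x', y') ∉ D.edges := fun h =>
    hCD C.end_mem_support (D.fst_mem_support_of_mem_edges h)
  rcases Sym2.eq_iff.mp he with ⟨rfl, rfl⟩ | ⟨rfl, rfl⟩
  · rw [h.eq_of_notMem_edges hA hC hAS hCS heA (he ▸ heC),
      h.eq_of_notMem_edges hB hD hBS hDS heB (he ▸ heD)]
  · rw [Sym2.eq_swap] at heC heD
    refine (h.false_of_crossing hA hC ?_ ?_ ?_ ?_ hAB hCD).elim
    · exact fun w hw => ((mem_support_append_iff _ _).mp hw).elim (hAS w) (hDS w)
    · exact fun w hw => ((mem_support_append_iff _ _).mp hw).elim (hCS w) (hBS w)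
    · simp [heA, heD]
    · simp [heB, heC]

theorem eq_of_mem_edges_iff (h : G.IsFeedbackEdge S e) {p q : G.Walk i j}
    (hp : p.IsPath) (hq : q.IsPath) (hpS : ∀ w ∈ p.support, w ∈ S)
    (hqS : ∀ w ∈ q.support, w ∈ S) (hpq : e ∈ p.edges ↔ e ∈ q.edges) : p = q := by
  by_cases hep : e ∈ p.edges
  · exact h.eq_of_mem_edges hp hq hpS hqS hep (hpq.mp hep)
  · exact h.eq_of_notMem_edges hp hq hpS hqS hep (hpq.not.mp hep)

end IsFeedbackEdge

end SimpleGraph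

section TangleFree

open SimpleGraph

variable {V : Type*} [DecidableEq V] {G : SimpleGraph V} {ℓ : ℕ}

theorem TangleFree.eq_or_eq_or_eq_of_isPath (htf : TangleFree G ℓ) {i j : V}
    {p q r : G.Walk i j} (hp : p.IsPath) (hq : q.IsPath) (hr : r.IsPath)
    (hpℓ : p.length ≤ ℓ) (hqℓ : q.length ≤ ℓ) (hrℓ : r.length ≤ ℓ) :
    p = q ∨ p = r ∨ q = r := by
  have hball : ∀ t : G.Walk i j, t.length ≤ ℓ → ∀ w ∈ t.support, G.edist i w ≤ ℓ :=
    fun t htℓ w hw => (t.edist_le_length_of_mem_support hw).trans (Nat.cast_le.mpr htℓ)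
  by_cases hpq : p = q
  · exact .inl hpq
  obtain ⟨a, -, -, c, hc, hcsub⟩ := hp.exists_isCycle_sublist_of_ne hq hpq
  have hcball : ∀ w ∈ c.support, G.edist i w ≤ ℓ := by
    intro w hw
    rcases List.mem_append.mp (hcsub.subset hw) with hw | hw
    exacts [hball p hpℓ w hw, hball q hqℓ w (List.mem_reverse.mp (List.mem_of_mem_tail hw))]
  obtain ⟨e, he⟩ := c.edges.exists_mem_of_ne_nil (by simp [hc.not_nil])
  have hfe : G.IsFeedbackEdge {w | G.edist i w ≤ ℓ} e := fun b c' hc' hc'ball => by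
    rw [← List.mem_toFinset, ← htf i a b c c' hc hc' hcball hc'ball, List.mem_toFinset]
    exact he
  have hiff : (e ∈ p.edges ↔ e ∈ q.edges) ∨ (e ∈ p.edges ↔ e ∈ r.edges) ∨
      (e ∈ q.edges ↔ e ∈ r.edges) := by tauto
  rcases hiff with hiff | hiff | hiff
  · exact .inl (hfe.eq_of_mem_edges_iff hp hq (hball p hpℓ) (hball q hqℓ) hiff)
  · exact .inr (.inl (hfe.eq_of_mem_edges_iff hp hr (hball p hpℓ) (hball r hrℓ) hiff))
  · exact .inr (.inr (hfe.eq_of_mem_edges_iff hq hr (hball q hqℓ) (hball r hrℓ) hiff))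

theorem TangleFree.encard_setOf_isPath_length_eq_le_two (htf : TangleFree G ℓ) (i j : V) :
    {p : G.Walk i j | p.IsPath ∧ p.length = ℓ}.encard ≤ 2 :=
  Set.encard_le_two_of_forall_eq_or_eq_or_eq fun _ ha _ hb _ hc =>
    htf.eq_or_eq_or_eq_of_isPath ha.1 hb.1 hc.1 ha.2.le hb.2.le hc.2.le

theorem TangleFree.subsingleton_setOf_isPath_length_eq (htf : TangleFree G ℓ) {i j : V}
    (hd : G.edist i j ≠ ℓ) : {p : G.Walk i j | p.IsPath ∧ p.length = ℓ}.Subsingleton := by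
  intro a ha b hb
  obtain ⟨g, hg, hgd⟩ := a.reachable.exists_isPath_length_eq_edist
  have hgℓ : g.length < ℓ := by
    have hle : (g.length : ℕ∞) ≤ ℓ := hgd ▸ ha.2 ▸ edist_le a
    exact_mod_cast lt_of_le_of_ne hle (hgd ▸ hd)
  rcases htf.eq_or_eq_or_eq_of_isPath ha.1 hb.1 hg ha.2.le hb.2.le hgℓ.le with h | h | h
  · exact h
  · exact absurd (h ▸ ha.2) hgℓ.ne
  · exact absurd (h ▸ hb.2) hgℓ.ne

end TangleFree

theorem distEntry_le_pathCount_le_succ_general {V : Type*} [DecidableEq V]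
    (G : SimpleGraph V) (ℓ : ℕ) (htf : TangleFree G ℓ) (i j : V) :
    distEntry G ℓ i j ≤ pathCount G ℓ i j ∧
    pathCount G ℓ i j ≤ distEntry G ℓ i j + 1 := by
  obtain ⟨hfin, hcard⟩ :=
    Set.encard_le_coe_iff_finite_ncard_le.mp (htf.encard_setOf_isPath_length_eq_le_two i j)
  unfold distEntry pathCount
  by_cases hd : G.edist i j = ℓ
  · have hij : G.Reachable i j :=
      SimpleGraph.reachable_of_edist_ne_top (hd ▸ ENat.natCast_ne_top ℓ)
    obtain ⟨g, hg, hgℓ⟩ := hij.exists_isPath_length_eq_edist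
    simp only [hd, if_true]
    exact ⟨(Set.ncard_pos hfin).mpr ⟨g, hg, by exact_mod_cast hgℓ.trans hd⟩, hcard⟩
  · simp only [hd, if_false, zero_le, zero_add, true_and]
    exact (Set.ncard_le_one hfin).mpr (htf.subsingleton_setOf_isPath_length_eq hd)

/-- In an `ℓ`-tangle-free graph, `D^(ℓ)_{ij} ≤ B^(ℓ)_{ij} ≤ D^(ℓ)_{ij} + 1`, i.e.
every entry of `B^(ℓ) - D^(ℓ)` lies in `{0, 1}`. -/
theorem distEntry_le_pathCount_le_succ {V : Type*} [Fintype V] [DecidableEq V]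
    (G : SimpleGraph V) (ℓ : ℕ) (hℓ : 1 ≤ ℓ) (htf : TangleFree G ℓ) (i j : V) :
    distEntry G ℓ i j ≤ pathCount G ℓ i j ∧
    pathCount G ℓ i j ≤ distEntry G ℓ i j + 1 :=
  distEntry_le_pathCount_le_succ_general G ℓ htf i j
end

section
/- Let G and G̃ be finite simple graphs on the same vertex set V, let K ⊆ V be nonempty, and assume that every edge in the symmetric difference of the edge sets of G and G̃ has at least one endpoint in K. Let ℓ ≥ 1 be an integer, α ≥ 1 and L > 0 real numbers, and assume that for each H ∈ {G, G̃} and each t ∈ {0, …, ℓ}, the number of vertices v with d_H(v, K) = t is at most L·α^t. Then the spectral radius of D̃^(ℓ) − D^(ℓ) is at most 2(ℓ+1)·L·α^{ℓ/2}. -/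
open scoped Matrix


/-- The spectral radius of a real symmetric matrix, defined (equivalently) as the ℓ2
operator norm of the induced operator on Euclidean space. -/
noncomputable def specRad {n : Type*} [Fintype n] [DecidableEq n]
    (A : Matrix n n ℝ) : ℝ :=
  ‖Matrix.toEuclideanCLM (𝕜 := ℝ) A‖

/-- The distance (in `ℕ∞`) from a vertex `v` to a set `S` of vertices. -/
noncomputable def edistToSet {V : Type*} (G : SimpleGraph V) (S : Set V) (v : V) : ℕ∞ :=
  ⨅ w ∈ S, G.edist v w

lemma edistToSet_le_edist {V : Type*} (H : SimpleGraph V) (K : Set V) {w : V} (hw : w ∈ K)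
    (v : V) : edistToSet H K v ≤ H.edist v w :=
  iInf₂_le w hw

lemma through_K {V : Type*} [DecidableEq V] (H : SimpleGraph V) (K : Set V) {i j w : V} (p : H.Walk i j)
    (hw : w ∈ p.support) (hwK : w ∈ K) :
    edistToSet H K i + edistToSet H K j ≤ (p.length : ℕ∞) := by
  have h1 : edistToSet H K i ≤ ((p.takeUntil w hw).length : ℕ∞) :=
    le_trans (edistToSet_le_edist H K hwK i) (SimpleGraph.edist_le _)
  have h2 : edistToSet H K j ≤ ((p.dropUntil w hw).length : ℕ∞) := by
    refine le_trans (edistToSet_le_edist H K hwK j) ?_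
    rw [SimpleGraph.edist_comm]
    exact SimpleGraph.edist_le _
  calc edistToSet H K i + edistToSet H K j
      ≤ (((p.takeUntil w hw).length : ℕ∞) + ((p.dropUntil w hw).length : ℕ∞)) :=
        add_le_add h1 h2
    _ = (p.length : ℕ∞) := by
        rw [← Nat.cast_add, ← SimpleGraph.Walk.length_append, SimpleGraph.Walk.take_spec]

lemma transfer_walk {V : Type*} (G G' : SimpleGraph V) (K : Set V)
    (hK : ∀ u v : V, ¬(G.Adj u v ↔ G'.Adj u v) → u ∈ K ∨ v ∈ K) {i j : V}
    (p : G.Walk i j) (hp : ∀ w ∈ p.support, w ∉ K) :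
    G'.edist i j ≤ (p.length : ℕ∞) := by
  have he : ∀ e ∈ p.edges, e ∈ G'.edgeSet := by
    intro e hmem
    induction e with
    | h u v =>
      have hadj : G.Adj u v := p.adj_of_mem_edges hmem
      have hu := SimpleGraph.Walk.fst_mem_support_of_mem_edges p hmem
      have hv := SimpleGraph.Walk.snd_mem_support_of_mem_edges p hmem
      have : G'.Adj u v := by
        by_contra hna
        rcases hK u v (fun hiff => hna (hiff.mp hadj)) with h | h
        exacts [hp u hu h, hp v hv h]
      exact this
  calc G'.edist i j ≤ ((p.transfer G' he).length : ℕ∞) := SimpleGraph.edist_le _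
    _ = (p.length : ℕ∞) := by rw [SimpleGraph.Walk.length_transfer]

lemma key_lemma {V : Type*} [DecidableEq V] (G G' : SimpleGraph V) (K : Set V)
    (hK : ∀ u v : V, ¬(G.Adj u v ↔ G'.Adj u v) → u ∈ K ∨ v ∈ K) (ℓ : ℕ) {i j : V}
    (h' : G'.edist i j = (ℓ : ℕ∞)) (h : G.edist i j ≠ (ℓ : ℕ∞)) :
    edistToSet G K i + edistToSet G K j ≤ (ℓ : ℕ∞) ∨
      edistToSet G' K i + edistToSet G' K j ≤ (ℓ : ℕ∞) := by
  obtain ⟨p, hp⟩ := SimpleGraph.exists_walk_of_edist_eq_coe h'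
  by_cases hsup : ∃ w ∈ p.support, w ∈ K
  · obtain ⟨w, hw, hwK⟩ := hsup
    right
    simpa [hp] using through_K G' K p hw hwK
  · push_neg at hsup
    have hK' : ∀ u v : V, ¬(G'.Adj u v ↔ G.Adj u v) → u ∈ K ∨ v ∈ K :=
      fun u v hh => hK u v (fun hiff => hh hiff.symm)
    have h1 : G.edist i j ≤ (ℓ : ℕ∞) := by
      have := transfer_walk G' G K hK' p hsup
      rwa [hp] at this
    have h2 : G.edist i j < (ℓ : ℕ∞) := lt_of_le_of_ne h1 h
    obtain ⟨m, hm⟩ : ∃ m : ℕ, G.edist i j = (m : ℕ∞) :=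
      ⟨(G.edist i j).toNat, (ENat.coe_toNat (ne_top_of_lt h2)).symm⟩
    obtain ⟨q, hq⟩ := SimpleGraph.exists_walk_of_edist_eq_coe hm
    by_cases hsq : ∃ w ∈ q.support, w ∈ K
    · obtain ⟨w, hw, hwK⟩ := hsq
      left
      refine le_trans (through_K G K q hw hwK) ?_
      rw [hq, ← hm]
      exact le_of_lt h2
    · push_neg at hsq
      exfalso
      have hle := transfer_walk G G' K hK q hsq
      rw [hq, ← hm, h'] at hle
      exact absurd (lt_of_le_of_lt hle h2) (lt_irrefl _)

lemma opNorm_le_frobenius {n : Type*} [Fintype n] [DecidableEq n] (A : Matrix n n ℝ) :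
    ‖Matrix.toEuclideanCLM (𝕜 := ℝ) A‖ ≤ Real.sqrt (∑ i, ∑ j, A i j ^ 2) := by
  apply ContinuousLinearMap.opNorm_le_bound _ (Real.sqrt_nonneg _)
  intro x
  have happ : (Matrix.toEuclideanCLM (𝕜 := ℝ) A x : EuclideanSpace ℝ n) =
      (WithLp.equiv 2 (n → ℝ)).symm (A *ᵥ (WithLp.equiv 2 (n → ℝ) x)) := rfl
  have hx : ‖x‖ = Real.sqrt (∑ j, (x j) ^ 2) := by
    rw [EuclideanSpace.norm_eq]
    simp [Real.norm_eq_abs, sq_abs]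
  have key : ∑ i, ((A *ᵥ (WithLp.equiv 2 (n → ℝ) x)) i) ^ 2 ≤
      (∑ i, ∑ j, A i j ^ 2) * (∑ j, (x j) ^ 2) := by
    rw [Finset.sum_mul]
    apply Finset.sum_le_sum
    intro i _
    simpa [Matrix.mulVec, dotProduct] using
      Finset.sum_mul_sq_le_sq_mul_sq Finset.univ (fun j => A i j) (fun j => x j)
  calc ‖(Matrix.toEuclideanCLM (𝕜 := ℝ) A) x‖
      = Real.sqrt (∑ i, ((A *ᵥ (WithLp.equiv 2 (n → ℝ) x)) i) ^ 2) := by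
        rw [happ, EuclideanSpace.norm_eq]
        simp [Real.norm_eq_abs, sq_abs]
    _ ≤ Real.sqrt ((∑ i, ∑ j, A i j ^ 2) * (∑ j, (x j) ^ 2)) := Real.sqrt_le_sqrt key
    _ = Real.sqrt (∑ i, ∑ j, A i j ^ 2) * Real.sqrt (∑ j, (x j) ^ 2) := by
        rw [Real.sqrt_mul (by positivity)]
    _ = Real.sqrt (∑ i, ∑ j, A i j ^ 2) * ‖x‖ := by rw [hx]


/-- Let `G`, `G'` be graphs on the same vertex set whose edge symmetric difference only
involves vertices of a nonempty set `K`, and suppose that in both graphs the number of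
vertices at distance `t ≤ ℓ` from `K` is at most `L·α^t`. Then the spectral radius of
`D̃^(ℓ) - D^(ℓ)` is at most `2(ℓ+1)·L·α^(ℓ/2)`. -/
theorem specRad_distMatrix_diff_le {V : Type*} [Fintype V] [DecidableEq V]
    (G G' : SimpleGraph V) (K : Set V) (hKne : K.Nonempty)
    (hK : ∀ u v : V, ¬(G.Adj u v ↔ G'.Adj u v) → u ∈ K ∨ v ∈ K)
    (ℓ : ℕ) (hℓ : 1 ≤ ℓ) (α L : ℝ) (hα : 1 ≤ α) (hL : 0 < L)
    (hgrowth : ∀ H : SimpleGraph V, (H = G ∨ H = G') → ∀ t ≤ ℓ,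
      ({v : V | edistToSet H K v = (t : ℕ∞)}.ncard : ℝ) ≤ L * α ^ t) :
    specRad (Matrix.of fun i j : V =>
        (if G'.edist i j = (ℓ : ℕ∞) then (1 : ℝ) else 0) -
          (if G.edist i j = (ℓ : ℕ∞) then (1 : ℝ) else 0)) ≤
      2 * ((ℓ : ℝ) + 1) * L * Real.sqrt (α ^ ℓ) := by
  classical
  set A : Matrix V V ℝ := Matrix.of fun i j : V =>
      (if G'.edist i j = (ℓ : ℕ∞) then (1 : ℝ) else 0) -
        (if G.edist i j = (ℓ : ℕ∞) then (1 : ℝ) else 0) with hA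
  -- Finset of vertices at distance s from K in H
  set SS : SimpleGraph V → ℕ → Finset V := fun H s =>
    Finset.univ.filter (fun v => edistToSet H K v = (s : ℕ∞)) with hSSdef
  have hSS : ∀ H : SimpleGraph V, (H = G ∨ H = G') → ∀ s ≤ ℓ,
      ((SS H s).card : ℝ) ≤ L * α ^ s := by
    intro H hH s hs
    have h1 := hgrowth H hH s hs
    have h2 : {v : V | edistToSet H K v = (s : ℕ∞)} = ↑(SS H s) := by
      ext v; simp [hSSdef]
    rwa [h2, Set.ncard_coe_finset] at h1
  set B : SimpleGraph V → Finset (V × V) := fun H =>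
    Finset.univ.filter
      (fun p => edistToSet H K p.1 + edistToSet H K p.2 ≤ (ℓ : ℕ∞)) with hBdef
  have hBcard : ∀ H : SimpleGraph V, (H = G ∨ H = G') →
      ((B H).card : ℝ) ≤ ((ℓ : ℝ) + 1) ^ 2 * (L ^ 2 * α ^ ℓ) := by
    intro H hH
    set T : Finset (ℕ × ℕ) :=
      (Finset.range (ℓ + 1) ×ˢ Finset.range (ℓ + 1)).filter
        (fun st => st.1 + st.2 ≤ ℓ) with hTdef
    have hsub : B H ⊆ T.biUnion (fun st => SS H st.1 ×ˢ SS H st.2) := by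
      rintro ⟨i, j⟩ hij
      rw [hBdef, Finset.mem_filter] at hij
      obtain ⟨-, hij⟩ := hij
      have hi_ne : edistToSet H K i ≠ ⊤ := by
        intro ht
        rw [ht, top_add] at hij
        exact absurd (le_antisymm hij le_top) (by simp)
      have hj_ne : edistToSet H K j ≠ ⊤ := by
        intro ht
        rw [ht, add_top] at hij
        exact absurd (le_antisymm hij le_top) (by simp)
      obtain ⟨s, hs⟩ : ∃ s : ℕ, edistToSet H K i = (s : ℕ∞) :=
        ⟨(edistToSet H K i).toNat, (ENat.coe_toNat hi_ne).symm⟩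
      obtain ⟨t, ht⟩ : ∃ t : ℕ, edistToSet H K j = (t : ℕ∞) :=
        ⟨(edistToSet H K j).toNat, (ENat.coe_toNat hj_ne).symm⟩
      have hst : s + t ≤ ℓ := by
        rw [hs, ht, ← Nat.cast_add] at hij
        exact_mod_cast hij
      refine Finset.mem_biUnion.2 ⟨(s, t), ?_, ?_⟩
      · rw [hTdef, Finset.mem_filter, Finset.mem_product]
        exact ⟨⟨Finset.mem_range.2 (by omega), Finset.mem_range.2 (by omega)⟩, hst⟩
      · rw [Finset.mem_product]
        constructor <;> · rw [hSSdef]; simp [hs, ht]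
    have hc1 : (B H).card ≤ ∑ st ∈ T, ((SS H st.1).card * (SS H st.2).card) := by
      refine le_trans (Finset.card_le_card hsub) ?_
      refine le_trans (Finset.card_biUnion_le) ?_
      exact Finset.sum_le_sum fun st _ => le_of_eq (Finset.card_product _ _)
    have hterm : ∀ st ∈ T, (((SS H st.1).card * (SS H st.2).card : ℕ) : ℝ) ≤ L ^ 2 * α ^ ℓ := by
      rintro ⟨s, t⟩ hst
      rw [hTdef, Finset.mem_filter, Finset.mem_product] at hst
      obtain ⟨⟨hs, ht⟩, hsum⟩ := hst
      have b1 : ((SS H s).card : ℝ) ≤ L * α ^ s :=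
        hSS H hH s (Nat.lt_succ_iff.mp (Finset.mem_range.mp hs))
      have b2 : ((SS H t).card : ℝ) ≤ L * α ^ t :=
        hSS H hH t (Nat.lt_succ_iff.mp (Finset.mem_range.mp ht))
      have hαpos : (0 : ℝ) < α := lt_of_lt_of_le one_pos hα
      calc (((SS H s).card * (SS H t).card : ℕ) : ℝ)
          = ((SS H s).card : ℝ) * ((SS H t).card : ℝ) := by push_cast; ring
        _ ≤ (L * α ^ s) * (L * α ^ t) := by
            apply mul_le_mul b1 b2 (by positivity) (by positivity)
        _ = L ^ 2 * α ^ (s + t) := by rw [pow_add]; ring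
        _ ≤ L ^ 2 * α ^ ℓ := by
            have := pow_le_pow_right₀ hα hsum
            nlinarith [sq_nonneg L]
    have hc2 : ((B H).card : ℝ) ≤ ∑ st ∈ T, (L ^ 2 * α ^ ℓ) := by
      calc ((B H).card : ℝ)
          ≤ ((∑ st ∈ T, ((SS H st.1).card * (SS H st.2).card) : ℕ) : ℝ) :=
            Nat.cast_le.2 hc1
        _ = ∑ st ∈ T, (((SS H st.1).card * (SS H st.2).card : ℕ) : ℝ) := by push_cast; rfl
        _ ≤ ∑ st ∈ T, (L ^ 2 * α ^ ℓ) := Finset.sum_le_sum hterm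
    have hTcard : (T.card : ℝ) ≤ ((ℓ : ℝ) + 1) ^ 2 := by
      have : T.card ≤ (ℓ + 1) * (ℓ + 1) := by
        refine le_trans (Finset.card_le_card (Finset.filter_subset _ _)) ?_
        rw [Finset.card_product, Finset.card_range]
      calc (T.card : ℝ) ≤ (((ℓ + 1) * (ℓ + 1) : ℕ) : ℝ) := Nat.cast_le.2 this
        _ = ((ℓ : ℝ) + 1) ^ 2 := by push_cast; ring
    calc ((B H).card : ℝ) ≤ ∑ st ∈ T, (L ^ 2 * α ^ ℓ) := hc2
      _ = (T.card : ℝ) * (L ^ 2 * α ^ ℓ) := by rw [Finset.sum_const, nsmul_eq_mul]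
      _ ≤ ((ℓ : ℝ) + 1) ^ 2 * (L ^ 2 * α ^ ℓ) := by
          have hαpos : (0 : ℝ) < α := lt_of_lt_of_le one_pos hα
          have : (0:ℝ) ≤ L ^ 2 * α ^ ℓ := by positivity
          exact mul_le_mul_of_nonneg_right hTcard this
  have hsupport : ∀ i j : V, A i j ≠ 0 → (i, j) ∈ B G ∪ B G' := by
    intro i j hne
    have hAij : A i j = (if G'.edist i j = (ℓ : ℕ∞) then (1 : ℝ) else 0) -
        (if G.edist i j = (ℓ : ℕ∞) then (1 : ℝ) else 0) := rfl
    by_cases h1 : G'.edist i j = (ℓ : ℕ∞) <;> by_cases h2 : G.edist i j = (ℓ : ℕ∞)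
    · exact absurd (by rw [hAij]; simp [h1, h2]) hne
    · rcases key_lemma G G' K hK ℓ h1 h2 with h | h
      · exact Finset.mem_union_left _ (by simp [hBdef, h])
      · exact Finset.mem_union_right _ (by simp [hBdef, h])
    · have hK' : ∀ u v : V, ¬(G'.Adj u v ↔ G.Adj u v) → u ∈ K ∨ v ∈ K :=
        fun u v hh => hK u v (fun hiff => hh hiff.symm)
      rcases key_lemma G' G K hK' ℓ h2 h1 with h | h
      · exact Finset.mem_union_right _ (by simp [hBdef, h])
      · exact Finset.mem_union_left _ (by simp [hBdef, h])
    · exact absurd (by rw [hAij]; simp [h1, h2]) hne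
  have hfro : (∑ i, ∑ j, A i j ^ 2) ≤ ((B G ∪ B G').card : ℝ) := by
    have hpt : ∀ p : V × V, p ∈ (Finset.univ : Finset (V × V)) →
        A p.1 p.2 ^ 2 ≤ (if p ∈ B G ∪ B G' then (1 : ℝ) else 0) := by
      rintro ⟨i, j⟩ -
      by_cases hmem : (i, j) ∈ B G ∪ B G'
      · simp only [hmem, if_true]
        have hAij : A i j = (if G'.edist i j = (ℓ : ℕ∞) then (1 : ℝ) else 0) -
            (if G.edist i j = (ℓ : ℕ∞) then (1 : ℝ) else 0) := rfl
        rw [hAij]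
        split_ifs <;> norm_num
      · have hz : A i j = 0 := not_not.mp (fun h => hmem (hsupport i j h))
        simp [hz, hmem]
    calc ∑ i, ∑ j, A i j ^ 2
        = ∑ p ∈ (Finset.univ : Finset V) ×ˢ (Finset.univ : Finset V), A p.1 p.2 ^ 2 := by
          rw [← Finset.sum_product']
      _ = ∑ p ∈ (Finset.univ : Finset (V × V)), A p.1 p.2 ^ 2 := by
          rw [Finset.univ_product_univ]
      _ ≤ ∑ p ∈ (Finset.univ : Finset (V × V)),
            (if p ∈ B G ∪ B G' then (1 : ℝ) else 0) := Finset.sum_le_sum hpt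
      _ = ∑ p ∈ (Finset.univ : Finset (V × V)) ∩ (B G ∪ B G'), (1 : ℝ) := by
          rw [Finset.sum_ite_mem]
      _ = ((B G ∪ B G').card : ℝ) := by rw [Finset.univ_inter, Finset.sum_const]; simp
  have hsum : (∑ i, ∑ j, A i j ^ 2) ≤ (2 * ((ℓ : ℝ) + 1) * L) ^ 2 * α ^ ℓ := by
    have hb1 := hBcard G (Or.inl rfl)
    have hb2 := hBcard G' (Or.inr rfl)
    have hcard : ((B G ∪ B G').card : ℝ) ≤ ((B G).card : ℝ) + ((B G').card : ℝ) := by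
      exact_mod_cast Finset.card_union_le _ _
    have hx : (0 : ℝ) ≤ ((ℓ : ℝ) + 1) ^ 2 * (L ^ 2 * α ^ ℓ) := by positivity
    nlinarith [hfro]
  calc specRad A ≤ Real.sqrt (∑ i, ∑ j, A i j ^ 2) := opNorm_le_frobenius A
    _ ≤ Real.sqrt ((2 * ((ℓ : ℝ) + 1) * L) ^ 2 * α ^ ℓ) := Real.sqrt_le_sqrt hsum
    _ = 2 * ((ℓ : ℝ) + 1) * L * Real.sqrt (α ^ ℓ) := by
        rw [Real.sqrt_mul (sq_nonneg _), Real.sqrt_sq (by positivity)]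
end
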